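/- For any finite sequence (u_i,ν_i)_{1≤i≤n} with pairwise distinct labels, the greedy heap patience sorting algorithm is optimal: R((u_i,ν_i)_{1≤i≤n}) equals the minimum of #{i : p(i) = 0} over all parent maps p : {1,…,n} → {0,1,…,n} satisfying p(i) < i for every i, u_{p(i)} < u_i whenever p(i) ≥ 1, and #{i : p(i) = j} ≤ ν_j for every j ∈ {1,…,n}. In other words, no way of inserting the items in order into heap-ordered trees with the given degree constraints uses fewer trees than the greedy algorithm. -/

import Mathlib

open MeasureTheory ProbabilityTheory Filter Topology
open scoped ENNReal NNReal

namespace HeapPatience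

/-- Decrement by one the number of lives of the (first) alive particle with label `x`. -/
noncomputable def decrementAt : List (ℝ × ℕ) → ℝ → List (ℝ × ℕ)
  | [], _ => []
  | p :: rest, x =>
      if p.1 = x ∧ 0 < p.2 then (p.1, p.2 - 1) :: rest else p :: decrementAt rest x

/-- One step of the heap patience sorting algorithm, where `acc = (state, number of roots)`:
the new item is attached as a child of the alive particle (a particle with at least one
remaining life) having the largest label smaller than the label of the item, and that
particle loses one life; if there is no such particle, a new root (tree) is created. -/
noncomputable def step (acc : List (ℝ × ℕ) × ℕ) (item : ℝ × ℕ) : List (ℝ × ℕ) × ℕ :=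
  match (acc.1.filter fun p => decide (0 < p.2 ∧ p.1 < item.1)).argmax Prod.fst with
  | none => (item :: acc.1, acc.2 + 1)
  | some q => (item :: decrementAt acc.1 q.1, acc.2)

/-- Run the heap patience sorting algorithm on the items `(label, lives)` in order; returns
the final state (the particles with their remaining lives) and the number of roots created. -/
noncomputable def run (items : List (ℝ × ℕ)) : List (ℝ × ℕ) × ℕ :=
  items.foldl step ([], 0)

/-- `R items` : the number of heaps (trees) produced by the heap patience sorting
algorithm applied to the finite sequence `items` of pairs `(label, number of lives)`. -/
noncomputable def R (items : List (ℝ × ℕ)) : ℕ := (run items).2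

/-- `D items` : after running the algorithm, the number of dead particles whose label is
smaller than the label of every alive particle, i.e. the number of leading zeros of the
label-ordered vector of remaining lives. -/
noncomputable def D (items : List (ℝ × ℕ)) : ℕ :=
  ((run items).1.filter fun p =>
      decide (p.2 = 0 ∧ ∀ q ∈ (run items).1, 0 < q.2 → p.1 < q.1)).length

/-- `Rn U ν n ω` : the random number of heaps `𝐑(n)` needed to sort the first `n`
random items `(U i ω, ν i ω)`. -/
noncomputable def Rn {Ω : Type} (U : ℕ → Ω → ℝ) (ν : ℕ → Ω → ℕ) (n : ℕ) (ω : Ω) : ℕ :=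
  R ((List.range n).map fun i => (U i ω, ν i ω))

/-- `Dn U ν n ω` : the random variable `D_n`, the number of dead items whose label is
smaller than the label of every alive item after sorting the first `n` random items. -/
noncomputable def Dn {Ω : Type} (U : ℕ → Ω → ℝ) (ν : ℕ → Ω → ℕ) (n : ℕ) (ω : Ω) : ℕ :=
  D ((List.range n).map fun i => (U i ω, ν i ω))

/-- The uniform probability measure on the interval `(0,1)`. -/
noncomputable def unif01 : Measure ℝ := volume.restrict (Set.Ioo 0 1)


/-!
Encode a forest by its parent map `p` and fix a threshold `t`. After the first `k` items, let the
potential `Φ_p(t)` be the number of remaining lives at vertices with label `< t`, minus the number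
of roots. Inserting item `k` raises `Φ_p(t)` by `ν k` if `u k < t`, and lowers it by one exactly
when the item becomes a root or is attached to a vertex with label `< t`.

By induction on `k`, the greedy forest `g` has the largest potential at every threshold. The only
nontrivial case is when `g` pays at `t` while `p` attaches item `k` to a vertex with label in
`[t, u k)`. Then `p` has a life in `[t, u k)` and `g` has none there (it uses the alive vertex of
largest label below `u k`), so `Φ_p(t) + 1 ≤ Φ_p(u k) ≤ Φ_g(u k) ≤ Φ_g(t)`. Below all labels the
potential is minus the number of roots.
-/

open Finset

variable {n : ℕ}

section ParentMaps

variable (p : Fin n → Option (Fin n))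

def parentCount (k : ℕ) (o : Option (Fin n)) : ℕ :=
  #{i | i.val < k ∧ p i = o}

theorem parentCount_zero (o : Option (Fin n)) : parentCount p 0 o = 0 := by
  simp [parentCount]

theorem parentCount_succ (k : Fin n) (o : Option (Fin n)) :
    parentCount p (k + 1) o = parentCount p k o + if p k = o then 1 else 0 := by
  simp only [parentCount, card_filter]
  rw [← Fintype.sum_ite_eq' k fun i => if p i = o then 1 else 0, ← sum_add_distrib]
  refine sum_congr rfl fun i _ => ?_
  by_cases hik : i = k
  · subst hik
    simp
  · have hik' : i.val ≠ k.val := Fin.val_ne_of_ne hik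
    rw [if_neg hik, add_zero]
    exact if_congr (and_congr_left fun _ => by omega) rfl rfl

theorem parentCount_le_card (k : ℕ) (o : Option (Fin n)) :
    parentCount p k o ≤ #{i | p i = o} :=
  card_le_card fun i hi => by
    simp only [mem_filter] at hi ⊢
    exact ⟨hi.1, hi.2.2⟩

theorem parentCount_of_le {k : ℕ} (hk : n ≤ k) (o : Option (Fin n)) :
    parentCount p k o = #{i | p i = o} := by
  unfold parentCount
  congr 1
  ext i
  simp only [mem_filter, mem_univ, true_and, and_iff_right_iff_imp]
  intro
  omega

theorem parentCount_update {k : Fin n} {m : ℕ} (hm : m ≤ k) (v o : Option (Fin n)) :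
    parentCount (Function.update p k v) m o = parentCount p m o := by
  unfold parentCount
  congr 1
  ext i
  simp only [mem_filter, mem_univ, true_and, and_congr_right_iff]
  intro hi
  rw [Function.update_of_ne (Fin.ne_of_lt (by omega))]

end ParentMaps

section Forests

variable (u : Fin n → ℝ) (ν : Fin n → ℕ) (p : Fin n → Option (Fin n))

def lives (k : ℕ) (j : Fin n) : ℕ :=
  ν j - parentCount p k (some j)

def IsParentMap : Prop :=
  ∀ i j, p i = some j → j < i ∧ u j < u i ∧ 0 < lives ν p i j

theorem isParentMap_iff :
    IsParentMap u ν p ↔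
      (∀ i j, p i = some j → j < i ∧ u j < u i) ∧ ∀ j, #{i | p i = some j} ≤ ν j := by
  constructor
  · intro hp
    refine ⟨fun i j h => ⟨(hp i j h).1, (hp i j h).2.1⟩, fun j => ?_⟩
    have bound : ∀ k ≤ n, parentCount p k (some j) ≤ ν j := by
      intro k hk
      induction k with
      | zero => simp [parentCount_zero]
      | succ k ih =>
        have hprev := ih (by omega)
        rw [parentCount_succ p ⟨k, hk⟩]
        split_ifs with h
        · have alive := (hp _ _ h).2.2
          rw [lives] at alive
          omega
        · omega
    rw [← parentCount_of_le p le_rfl]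
    exact bound n le_rfl
  · rintro ⟨hlt, hle⟩ i j h
    refine ⟨(hlt i j h).1, (hlt i j h).2, ?_⟩
    have hsucc := parentCount_succ p i (some j)
    rw [if_pos h] at hsucc
    have := parentCount_le_card p (i + 1) (some j)
    have := hle j
    rw [lives]
    omega

end Forests

section Potential

variable {u : Fin n → ℝ} {ν : Fin n → ℕ} {p : Fin n → Option (Fin n)}

variable (u ν p) in
noncomputable def capacity (k : ℕ) (t : ℝ) : ℕ :=
  ∑ j with j.val < k ∧ u j < t, lives ν p k j

variable (u ν p) in
noncomputable def potential (k : ℕ) (t : ℝ) : ℤ :=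
  capacity u ν p k t - parentCount p k none

variable (u p) in
def ParentBelow (k : Fin n) (t : ℝ) : Prop :=
  ∀ q, p k = some q → u q < t

variable (u ν p) in
/-- Together with `IsParentMap`, this says that item `k` is attached to the alive vertex with
the largest label below `u k`, and is a root only when there is none. -/
def IsGreedyAt (k : Fin n) : Prop :=
  ∀ j < k, u j < u k → 0 < lives ν p k j → ∃ q, p k = some q ∧ u j ≤ u q

theorem lives_succ (k : Fin n) (j : Fin n) :
    lives ν p (k + 1) j = lives ν p k j - if p k = some j then 1 else 0 := by
  rw [lives, lives, parentCount_succ, Nat.sub_sub]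

theorem lives_succ_self (hp : IsParentMap u ν p) (k : Fin n) : lives ν p (k + 1) k = ν k := by
  suffices parentCount p (k + 1) (some k) = 0 by rw [lives, this, Nat.sub_zero]
  refine card_eq_zero.2 (filter_eq_empty_iff.2 fun i _ ⟨hik, hi⟩ => ?_)
  have := (hp i k hi).1
  omega

theorem capacity_succ_add (hp : IsParentMap u ν p) (k : Fin n) (t : ℝ) :
    capacity u ν p (k + 1) t + ∑ j with u j < t, (if p k = some j then 1 else 0) =
      capacity u ν p k t + if u k < t then ν k else 0 := by
  simp only [capacity, sum_filter]
  rw [← Fintype.sum_ite_eq' k fun j => if u j < t then ν j else 0, ← sum_add_distrib,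
    ← sum_add_distrib]
  refine sum_congr rfl fun j _ => ?_
  by_cases hjk : j = k
  · subst hjk
    have : p j ≠ some j := fun h => lt_irrefl j (hp j j h).1
    simp [lives_succ_self hp, this]
  · have hjk' : j.val ≠ k.val := Fin.val_ne_of_ne hjk
    rw [lives_succ, if_neg hjk, add_zero]
    by_cases hpk : p k = some j
    · obtain ⟨hjlt, -, halive⟩ := hp k j hpk
      have hj : j.val < k := hjlt
      simp only [hpk, if_true]
      by_cases ht : u j < t
      · rw [if_pos ⟨by omega, ht⟩, if_pos ht, if_pos ⟨hj, ht⟩]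
        omega
      · rw [if_neg fun h => ht h.2, if_neg ht, if_neg fun h => ht h.2, add_zero]
    · simp only [hpk, if_false, Nat.sub_zero, ite_self, add_zero]
      exact if_congr (and_congr_left fun _ => by omega) rfl rfl

theorem potential_succ_of_parentBelow (hp : IsParentMap u ν p) {k : Fin n} {t : ℝ}
    (h : ParentBelow u p k t) :
    potential u ν p (k + 1) t + 1 = potential u ν p k t + (if u k < t then ν k else 0 : ℕ) := by
  have hcap := capacity_succ_add hp k t
  have hroots := parentCount_succ p k none
  simp only [potential]
  rcases hpk : p k with _ | q
  · simp only [hpk, reduceCtorEq, if_false, sum_const_zero, add_zero, if_true] at hcap hroots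
    omega
  · have : u q < t := h q hpk
    simp only [hpk, Option.some_inj, reduceCtorEq, if_false, add_zero] at hcap hroots
    rw [sum_ite_eq, if_pos (by simpa using this)] at hcap
    omega

theorem potential_succ_of_not_parentBelow (hp : IsParentMap u ν p) {k : Fin n} {t : ℝ}
    (h : ¬ ParentBelow u p k t) :
    potential u ν p (k + 1) t = potential u ν p k t + (if u k < t then ν k else 0 : ℕ) := by
  simp only [ParentBelow, not_forall, not_lt] at h
  obtain ⟨q, hpk, hqt⟩ := h
  have hcap := capacity_succ_add hp k t
  have hroots := parentCount_succ p k none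
  simp only [hpk, Option.some_inj, reduceCtorEq, if_false, add_zero] at hcap hroots
  rw [sum_ite_eq, if_neg (by simpa using hqt), add_zero] at hcap
  simp only [potential]
  omega

theorem potential_add_one_le_of_not_parentBelow (hp : IsParentMap u ν p) {k : Fin n} {t : ℝ}
    (h : ¬ ParentBelow u p k t) : potential u ν p k t + 1 ≤ potential u ν p k (u k) := by
  simp only [ParentBelow, not_forall, not_lt] at h
  obtain ⟨q, hpk, hqt⟩ := h
  obtain ⟨hqk, hqu, halive⟩ := hp k q hpk
  have hcap : capacity u ν p k t < capacity u ν p k (u k) := by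
    refine sum_lt_sum_of_subset (fun j hj => ?_) (i := q) (by simpa using ⟨hqk, hqu⟩)
      (by simp [hqt]) halive fun _ _ _ => Nat.zero_le _
    simp only [mem_filter, mem_univ, true_and] at hj ⊢
    exact ⟨hj.1, by linarith⟩
  simp only [potential]
  omega

theorem potential_le_of_isGreedyAt {k : Fin n} {t : ℝ} (hg : IsGreedyAt u ν p k)
    (h : ParentBelow u p k t) : potential u ν p k (u k) ≤ potential u ν p k t := by
  have hcap : capacity u ν p k (u k) ≤ capacity u ν p k t := by
    rw [capacity, ← sum_filter_ne_zero]
    refine sum_le_sum_of_subset fun j hj => ?_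
    simp only [mem_filter, mem_univ, true_and] at hj ⊢
    obtain ⟨⟨hjk, hju⟩, halive⟩ := hj
    obtain ⟨q, hpk, hjq⟩ := hg j hjk hju (Nat.pos_of_ne_zero halive)
    exact ⟨hjk, hjq.trans_lt (h q hpk)⟩
  simp only [potential]
  omega

theorem potential_eq_of_forall_le {t : ℝ} (ht : ∀ j, t ≤ u j) (k : ℕ) :
    potential u ν p k t = -parentCount p k none := by
  have : capacity u ν p k t = 0 :=
    sum_eq_zero fun j hj => absurd (mem_filter.1 hj).2.2 (not_lt.2 (ht j))
  simp [potential, this]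

variable {g : Fin n → Option (Fin n)}

theorem potential_le_of_isGreedy (hg : IsParentMap u ν g) (hgreedy : ∀ k, IsGreedyAt u ν g k)
    (hp : IsParentMap u ν p) {k : ℕ} (hk : k ≤ n) (t : ℝ) :
    potential u ν p k t ≤ potential u ν g k t := by
  induction k generalizing t with
  | zero => simp [potential, capacity, parentCount_zero]
  | succ k ih =>
    set K : Fin n := ⟨k, hk⟩
    have ih := ih (by omega)
    by_cases hgt : ParentBelow u g K t
    · have hg_succ := potential_succ_of_parentBelow hg hgt
      by_cases hpt : ParentBelow u p K t
      · have hp_succ := potential_succ_of_parentBelow hp hpt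
        linarith [ih t]
      · have hp_succ := potential_succ_of_not_parentBelow hp hpt
        have hp_jump := potential_add_one_le_of_not_parentBelow hp hpt
        have hg_flat := potential_le_of_isGreedyAt (hgreedy K) hgt
        linarith [ih (u K)]
    · have hg_succ := potential_succ_of_not_parentBelow hg hgt
      by_cases hpt : ParentBelow u p K t
      · have hp_succ := potential_succ_of_parentBelow hp hpt
        linarith [ih t]
      · have hp_succ := potential_succ_of_not_parentBelow hp hpt
        linarith [ih t]

theorem card_roots_le_of_isGreedy (hg : IsParentMap u ν g) (hgreedy : ∀ k, IsGreedyAt u ν g k)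
    (hp : IsParentMap u ν p) : #{i | g i = none} ≤ #{i | p i = none} := by
  obtain ⟨t, ht⟩ := Finite.bddBelow_range u
  have hle := potential_le_of_isGreedy hg hgreedy hp le_rfl t
  rw [potential_eq_of_forall_le (fun j => ht ⟨j, rfl⟩),
    potential_eq_of_forall_le (fun j => ht ⟨j, rfl⟩), parentCount_of_le _ le_rfl,
    parentCount_of_le _ le_rfl] at hle
  omega

end Potential

section Step

variable {s : List (ℝ × ℕ)} {x : ℝ} {q : ℝ × ℕ}

theorem step_of_argmax_eq_none {r m : ℕ}
    (h : (s.filter fun p => decide (0 < p.2 ∧ p.1 < x)).argmax Prod.fst = none) :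
    step (s, r) (x, m) = ((x, m) :: s, r + 1) := by
  simp only [step, h]

theorem step_of_argmax_eq_some {r m : ℕ}
    (h : (s.filter fun p => decide (0 < p.2 ∧ p.1 < x)).argmax Prod.fst = some q) :
    step (s, r) (x, m) = ((x, m) :: decrementAt s q.1, r) := by
  simp only [step, h]

theorem eq_zero_of_argmax_eq_none
    (h : (s.filter fun p => decide (0 < p.2 ∧ p.1 < x)).argmax Prod.fst = none)
    {y : ℝ × ℕ} (hy : y ∈ s) (hyx : y.1 < x) : y.2 = 0 := by
  rw [List.argmax_eq_none, List.filter_eq_nil_iff] at h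
  simpa [hyx] using h y hy

theorem mem_of_argmax_eq_some
    (h : (s.filter fun p => decide (0 < p.2 ∧ p.1 < x)).argmax Prod.fst = some q) :
    q ∈ s ∧ 0 < q.2 ∧ q.1 < x := by
  simpa using List.argmax_mem h

theorem le_of_argmax_eq_some
    (h : (s.filter fun p => decide (0 < p.2 ∧ p.1 < x)).argmax Prod.fst = some q)
    {y : ℝ × ℕ} (hy : y ∈ s) (hy0 : 0 < y.2) (hyx : y.1 < x) : y.1 ≤ q.1 :=
  List.le_of_mem_argmax (by simpa [hy0, hyx] using hy) h

end Step

section Greedy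

variable {u : Fin n → ℝ} {ν : Fin n → ℕ} {p : Fin n → Option (Fin n)}

theorem isParentMap_update (hp : IsParentMap u ν p) {k j : Fin n}
    (hnone : ∀ i : Fin n, k ≤ i → p i = none) (hjk : j < k) (hju : u j < u k)
    (halive : 0 < lives ν p k j) : IsParentMap u ν (Function.update p k (some j)) := by
  intro i j' hi
  by_cases hik : i = k
  · subst hik
    obtain rfl : j = j' := by simpa using hi
    rw [lives, parentCount_update _ le_rfl]
    exact ⟨hjk, hju, halive⟩
  · rw [Function.update_of_ne hik] at hi
    have hik' : i < k := lt_of_not_ge fun h => by simp [hnone i h] at hi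
    rw [lives, parentCount_update _ hik'.le]
    exact hp i j' hi

theorem isGreedyAt_update {i k : Fin n} (hik : i < k) (v : Option (Fin n))
    (h : IsGreedyAt u ν p i) : IsGreedyAt u ν (Function.update p k v) i := by
  intro j hji hju halive
  rw [lives, parentCount_update _ hik.le] at halive
  rw [Function.update_of_ne hik.ne]
  exact h j hji hju halive

theorem mem_take_finRange {k : ℕ} {i : Fin n} : i ∈ (List.finRange n).take k ↔ i.val < k := by
  simp only [List.mem_take_iff_getElem, List.getElem_finRange, List.length_finRange, lt_min_iff]
  exact ⟨fun ⟨j, h, e⟩ => e ▸ h.1, fun h => ⟨i, ⟨h, i.isLt⟩, rfl⟩⟩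

theorem take_finRange_succ (k : Fin n) :
    (List.finRange n).take (k + 1) = (List.finRange n).take k ++ [k] := by
  simp [List.take_add_one]

theorem run_take_succ (f : Fin n → ℝ × ℕ) (k : Fin n) :
    run (((List.finRange n).map f).take (k + 1)) =
      step (run (((List.finRange n).map f).take k)) (f k) := by
  simp only [← List.map_take, take_finRange_succ, List.map_append, run, List.foldl_append]
  rfl

theorem decrementAt_map (hu : Function.Injective u) (w : Fin n → ℕ) {l : List (Fin n)}
    (hl : l.Nodup) {j : Fin n} (hj : j ∈ l) (hw : 0 < w j) :
    decrementAt (l.map fun i => (u i, w i)) (u j) =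
      l.map fun i => (u i, w i - if j = i then 1 else 0) := by
  induction l with
  | nil => simp at hj
  | cons a l ih =>
    obtain ⟨hal, hl⟩ := List.nodup_cons.1 hl
    rw [List.map_cons, List.map_cons, decrementAt]
    by_cases hja : j = a
    · subst hja
      rw [if_pos ⟨rfl, hw⟩, if_pos rfl]
      refine congrArg _ (List.map_congr_left fun i hi => ?_)
      rw [if_neg (ne_of_mem_of_not_mem hi hal).symm, Nat.sub_zero]
    · have hj : j ∈ l := (List.mem_cons.1 hj).resolve_left hja
      rw [if_neg fun h => hja (hu h.1).symm, ih hl hj, if_neg hja, Nat.sub_zero]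

variable (u ν) in
/-- The state of the algorithm after `k` items, newest first since `step` conses each item onto
the state. -/
noncomputable def greedyState (p : Fin n → Option (Fin n)) (k : ℕ) : List (ℝ × ℕ) :=
  ((List.finRange n).take k).reverse.map fun i => (u i, lives ν p k i)

theorem mem_greedyState {k : ℕ} {x : ℝ × ℕ} :
    x ∈ greedyState u ν p k ↔ ∃ j : Fin n, j.val < k ∧ (u j, lives ν p k j) = x := by
  simp only [greedyState, List.mem_map, List.mem_reverse, mem_take_finRange]

theorem greedyState_succ (hp : IsParentMap u ν p) (k : Fin n) :
    greedyState u ν p (k + 1) = (u k, ν k) :: ((List.finRange n).take k).reverse.map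
      fun i => (u i, lives ν p k i - if p k = some i then 1 else 0) := by
  simp only [greedyState, take_finRange_succ, List.reverse_append, List.reverse_singleton,
    List.singleton_append, List.map_cons]
  rw [lives_succ_self hp]
  simp only [lives_succ]

variable {g : Fin n → Option (Fin n)}

variable (u ν) in
structure EncodesRun (g : Fin n → Option (Fin n)) (k : ℕ) : Prop where
  eq_none : ∀ i : Fin n, k ≤ i → g i = none
  isParentMap : IsParentMap u ν g
  isGreedyAt : ∀ i : Fin n, i < k → IsGreedyAt u ν g i
  run_eq : run (((List.finRange n).map fun i => (u i, ν i)).take k) =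
    (greedyState u ν g k, parentCount g k none)

theorem encodesRun_zero : EncodesRun u ν (fun _ => none) 0 where
  eq_none _ _ := rfl
  isParentMap _ _ h := by simp at h
  isGreedyAt _ h := absurd h (Nat.not_lt_zero _)
  run_eq := by simp [run, greedyState, parentCount_zero]

theorem EncodesRun.succ_of_argmax_eq_none {k : Fin n} (h : EncodesRun u ν g k)
    (hnone : ((greedyState u ν g k).filter fun p => decide (0 < p.2 ∧ p.1 < u k)).argmax
      Prod.fst = none) :
    EncodesRun u ν g (k + 1) := by
  have hk : g k = none := h.eq_none k le_rfl
  refine ⟨fun i hi => h.eq_none i (by omega), h.isParentMap, fun i hi => ?_, ?_⟩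
  · rcases (Nat.lt_succ_iff_lt_or_eq.1 hi) with hik | hik
    · exact h.isGreedyAt i hik
    obtain rfl : i = k := Fin.ext hik
    intro j hji hju halive
    have hdead := eq_zero_of_argmax_eq_none hnone (mem_greedyState.2 ⟨j, hji, rfl⟩) hju
    exact absurd hdead halive.ne'
  · rw [run_take_succ, h.run_eq, step_of_argmax_eq_none hnone, greedyState_succ h.isParentMap,
      parentCount_succ, if_pos hk]
    simp [hk, greedyState]

theorem EncodesRun.exists_succ_of_argmax_eq_some (hu : Function.Injective u) {k : Fin n}
    (h : EncodesRun u ν g k) {q : ℝ × ℕ}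
    (hsome : ((greedyState u ν g k).filter fun p => decide (0 < p.2 ∧ p.1 < u k)).argmax
      Prod.fst = some q) :
    ∃ g', EncodesRun u ν g' (k + 1) := by
  obtain ⟨hq, hqalive, hqu⟩ := mem_of_argmax_eq_some hsome
  obtain ⟨j, hjk, rfl⟩ := mem_greedyState.1 hq
  have hjk : j < k := hjk
  have hparent := isParentMap_update h.isParentMap h.eq_none hjk hqu hqalive
  refine ⟨_, fun i hi => ?_, hparent, fun i hi => ?_, ?_⟩
  · rw [Function.update_of_ne (Fin.ne_of_gt (by omega))]
    exact h.eq_none i (by omega)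
  · rcases (Nat.lt_succ_iff_lt_or_eq.1 hi) with hik | hik
    · exact isGreedyAt_update hik _ (h.isGreedyAt i hik)
    obtain rfl : i = k := Fin.ext hik
    intro j' hj'i hj'u halive
    rw [lives, parentCount_update _ le_rfl] at halive
    refine ⟨j, Function.update_self .., ?_⟩
    exact le_of_argmax_eq_some hsome (mem_greedyState.2 ⟨j', hj'i, rfl⟩) halive hj'u
  · have hnodup : ((List.finRange n).take k).reverse.Nodup :=
      List.nodup_reverse.2 ((List.nodup_finRange n).sublist (List.take_sublist _ _))
    rw [run_take_succ, h.run_eq, step_of_argmax_eq_some hsome, greedyState_succ hparent,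
      parentCount_succ, Function.update_self, if_neg (Option.some_ne_none j),
      parentCount_update _ le_rfl, greedyState,
      decrementAt_map hu _ hnodup (List.mem_reverse.2 (mem_take_finRange.2 hjk)) hqalive]
    simp only [lives, parentCount_update _ le_rfl, Option.some_inj, add_zero]

variable (ν) in
theorem exists_encodesRun (hu : Function.Injective u) {k : ℕ} (hk : k ≤ n) :
    ∃ g, EncodesRun u ν g k := by
  induction k with
  | zero => exact ⟨_, encodesRun_zero⟩
  | succ k ih =>
    obtain ⟨g, hg⟩ := ih (by omega)
    set K : Fin n := ⟨k, hk⟩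
    rcases hmatch : ((greedyState u ν g K).filter fun p =>
        decide (0 < p.2 ∧ p.1 < u K)).argmax Prod.fst with _ | q
    · exact ⟨g, hg.succ_of_argmax_eq_none hmatch⟩
    · exact hg.exists_succ_of_argmax_eq_some hu hmatch

variable (ν) in
theorem exists_isGreedy (hu : Function.Injective u) :
    ∃ g, IsParentMap u ν g ∧ (∀ k, IsGreedyAt u ν g k) ∧
      R ((List.finRange n).map fun i => (u i, ν i)) = #{i | g i = none} := by
  obtain ⟨g, hg⟩ := exists_encodesRun ν hu le_rfl
  refine ⟨g, hg.isParentMap, fun k => hg.isGreedyAt k k.isLt, ?_⟩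
  have hrun := congrArg Prod.snd hg.run_eq
  rw [List.take_of_length_le (by simp)] at hrun
  rw [R, hrun, parentCount_of_le g le_rfl]

end Greedy

theorem greedy_is_optimal_general
    (n : ℕ) (u : Fin n → ℝ)
    (huinj : Function.Injective u)
    (ν : Fin n → ℕ) :
    IsLeast
      { r : ℕ | ∃ p : Fin n → Option (Fin n),
          (∀ i j, p i = some j → j < i ∧ u j < u i) ∧
          (∀ j, (Finset.univ.filter fun i => p i = some j).card ≤ ν j) ∧
          r = (Finset.univ.filter fun i => p i = none).card }
      (R ((List.finRange n).map fun i => (u i, ν i))) := by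
  obtain ⟨g, hg, hgreedy, hR⟩ := exists_isGreedy ν huinj
  obtain ⟨hg_order, hg_lives⟩ := (isParentMap_iff u ν g).1 hg
  refine ⟨⟨g, hg_order, hg_lives, hR⟩, ?_⟩
  rintro _ ⟨p, hp_order, hp_lives, rfl⟩
  rw [hR]
  exact card_roots_le_of_isGreedy hg hgreedy ((isParentMap_iff u ν p).2 ⟨hp_order, hp_lives⟩)

/-- The greedy heap patience sorting algorithm is optimal: `R` equals the least number
of roots over all admissible parent maps. -/
theorem greedy_is_optimal
    (n : ℕ) (u : Fin n → ℝ)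
    (hu : ∀ i, u i ∈ Set.Ioo (0 : ℝ) 1) (huinj : Function.Injective u)
    (ν : Fin n → ℕ) (hν : ∀ i, 1 ≤ ν i) :
    IsLeast
      { r : ℕ | ∃ p : Fin n → Option (Fin n),
          (∀ i j, p i = some j → j < i ∧ u j < u i) ∧
          (∀ j, (Finset.univ.filter fun i => p i = some j).card ≤ ν j) ∧
          r = (Finset.univ.filter fun i => p i = none).card }
      (R ((List.finRange n).map fun i => (u i, ν i))) :=
  greedy_is_optimal_general n u huinj ν

end HeapPatience
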